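/- Let p be an odd prime such that N = (3^p + 1)/4 is prime. Define s_0 = 2 and s_{k+1} = s_k(4s_k² − 3). Then N divides s_p − 194 + (−1)^((p−1)/2)·168. -/

import Mathlib

/-! With `ω = 2 + √3` and `ω⁻¹ = 2 - √3`, the recursion is the triplication formula
`T₃(x) = 4x³ - 3x`, so `2 s_k = ω ^ 3 ^ k + ω⁻¹ ^ 3 ^ k` in any commutative ring containing a square
root `t` of `3`. Take such a ring of characteristic `N`. The Frobenius gives `ω ^ N = 2 + ε t` with
`ε = (3 / N)`, and since `3 ^ p = 4 N - 1`, `ω ^ 3 ^ p = (2 + ε t) ^ 4 ω⁻¹`; adding the conjugate,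
`2 s_p ≡ 388 - 336 ε (mod N)`. Finally `N ≡ 1 (mod 3)` and `N ≡ p (mod 4)`, so quadratic
reciprocity gives `ε = (-1) ^ ((p - 1) / 2)`. -/

def cubicSeq : ℕ → ℤ
  | 0 => 2
  | k + 1 => cubicSeq k * (4 * cubicSeq k ^ 2 - 3)

lemma cubicSeq_mul_two {R : Type*} [CommRing R] {a b : R} (hab : a * b = 1) (hsum : a + b = 4)
    (k : ℕ) : (cubicSeq k : R) * 2 = a ^ 3 ^ k + b ^ 3 ^ k := by
  induction k with
  | zero => simp only [cubicSeq, pow_zero, pow_one, hsum]; norm_num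
  | succ k ih =>
    have hk : a ^ 3 ^ k * b ^ 3 ^ k = 1 := by rw [← mul_pow, hab, one_pow]
    rw [pow_succ, pow_mul, pow_mul, cubicSeq]
    push_cast
    linear_combination (4 * (cubicSeq k : R) ^ 2 + 2 * cubicSeq k * (a ^ 3 ^ k + b ^ 3 ^ k)
      + (a ^ 3 ^ k + b ^ 3 ^ k) ^ 2 - 3) * ih + 3 * (a ^ 3 ^ k + b ^ 3 ^ k) * hk

lemma intCast_add_sqrt_pow_char {R : Type*} [CommRing R] {q : ℕ} [Fact q.Prime] [CharP R q]
    (hq : q ≠ 2) (a d : ℤ) {t : R} (ht : t ^ 2 = d) :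
    ((a : R) + t) ^ q = a + legendreSym q d * t := by
  have ha : (a : R) ^ q = a := by
    simpa only [map_pow, map_intCast] using
      congrArg (ZMod.castHom (dvd_refl q) R) (ZMod.pow_card (a : ZMod q))
  have hleg : (legendreSym q d : R) = (d : R) ^ (q / 2) := by
    simpa only [map_pow, map_intCast] using
      congrArg (ZMod.castHom (dvd_refl q) R) (legendreSym.eq_pow q d)
  have hq_odd : q = 2 * (q / 2) + 1 :=
    (Nat.two_mul_div_two_add_one_of_odd ((Fact.out : q.Prime).odd_of_ne_two hq)).symm
  rw [add_pow_char, ha, hleg]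
  conv_lhs => rw [hq_odd, pow_succ, pow_mul, ht]

lemma cubicSeq_mul_two_of_frobenius {R : Type*} [CommRing R] {t ε : R} (ht : t ^ 2 = 3)
    (hε : ε ^ 2 = 1) {n p : ℕ} (hnp : 3 ^ p + 1 = 4 * n) (hplus : (2 + t) ^ n = 2 + ε * t)
    (hminus : (2 - t) ^ n = 2 - ε * t) :
    (cubicSeq p : R) * 2 = 388 - 336 * ε := by
  have hunit : (2 + t) * (2 - t) = 1 := by linear_combination -ht
  have hεt : (ε * t) ^ 2 = 3 := by linear_combination ε ^ 2 * ht + 3 * hε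
  have key (a b u : R) (hab : a * b = 1) (ha : a ^ n = 2 + u) (hu : u ^ 2 = 3) :
      a ^ 3 ^ p = (97 + 56 * u) * b :=
    calc a ^ 3 ^ p = (a ^ n) ^ 4 * b := by
          rw [← pow_mul', ← hnp, pow_succ, mul_assoc, hab, mul_one]
      _ = (97 + 56 * u) * b := by rw [ha]; linear_combination (u ^ 2 + 8 * u + 27) * hu * b
  rw [cubicSeq_mul_two hunit (by ring), key _ _ _ hunit hplus hεt,
    key _ _ (-(ε * t)) (by rw [mul_comm, hunit]) (by rw [hminus]; ring) (by rw [neg_sq, hεt])]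
  linear_combination (-112 * ε) * ht

lemma legendreSym_three_of_mod_three_eq_one {q : ℕ} [Fact q.Prime] (hq2 : q ≠ 2)
    (hq3 : q % 3 = 1) : legendreSym q 3 = (-1) ^ (q / 2) := by
  have : Fact (Nat.Prime 3) := ⟨Nat.prime_three⟩
  have h3q : legendreSym 3 q = 1 := by
    rw [legendreSym.mod, show (q : ℤ) % (3 : ℕ) = 1 by omega, legendreSym.at_one]
  simpa [h3q] using legendreSym.quadratic_reciprocity' (p := 3) (q := q) (by norm_num) hq2

lemma dvd_cubicSeq_sub_of_sq_eq_three {R : Type*} [CommRing R] {q p : ℕ} [Fact q.Prime]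
    [CharP R q] {t : R} (ht : t ^ 2 = 3) (hq2 : q ≠ 2) (hq3 : q % 3 = 1)
    (hqp : 3 ^ p + 1 = 4 * q) : (q : ℤ) ∣ cubicSeq p - 194 + (-1) ^ (q / 2) * 168 := by
  have ht' : t ^ 2 = ((3 : ℤ) : R) := by rw [ht, Int.cast_ofNat]
  have hplus := intCast_add_sqrt_pow_char hq2 2 3 ht'
  have hminus := intCast_add_sqrt_pow_char hq2 2 3 (t := -t) (by rw [neg_sq, ht'])
  rw [legendreSym_three_of_mod_three_eq_one hq2 hq3] at hplus hminus
  push_cast at hplus hminus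
  have hε : ((-1 : R) ^ (q / 2)) ^ 2 = 1 := by
    rw [← pow_mul, mul_comm, pow_mul, neg_one_sq, one_pow]
  have hs := cubicSeq_mul_two_of_frobenius ht hε hqp hplus
    (by rw [sub_eq_add_neg, hminus]; ring)
  have h2 : (q : ℤ) ∣ 2 * (cubicSeq p - 194 + (-1) ^ (q / 2) * 168) := by
    rw [← CharP.intCast_eq_zero_iff R q]; push_cast; linear_combination hs
  refine (Int.Prime.dvd_mul' Fact.out h2).resolve_left fun hq => hq2 ?_
  exact (Nat.prime_dvd_prime_iff_eq Fact.out Nat.prime_two).mp (by exact_mod_cast hq)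

lemma three_pow_add_one_mod_sixteen {p : ℕ} (hp : Odd p) : (3 ^ p + 1) % 16 = 4 * p % 16 := by
  obtain ⟨m, rfl⟩ := hp
  induction m with
  | zero => norm_num
  | succ m ih =>
    rw [show 3 ^ (2 * (m + 1) + 1) = 9 * 3 ^ (2 * m + 1) by ring]
    generalize 3 ^ (2 * m + 1) = x at ih
    omega

instance QuadraticAlgebra.charP {R : Type*} [CommRing R] {a b : R} (q : ℕ) [CharP R q] :
    CharP (QuadraticAlgebra R a b) q :=
  charP_of_injective_algebraMap QuadraticAlgebra.C_injective q

theorem base_three_wagstaff_test_general (p : ℕ) (hodd : Odd p)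
    (hN : Nat.Prime ((3 ^ p + 1) / 4)) :
    (((3 ^ p + 1) / 4 : ℕ) : ℤ) ∣
      cubicSeq p - 194 + (-1) ^ ((p - 1) / 2) * 168 := by
  set N := (3 ^ p + 1) / 4
  have : Fact N.Prime := ⟨hN⟩
  have h16 := three_pow_add_one_mod_sixteen hodd
  have h3 : 3 ∣ 3 ^ p := dvd_pow_self 3 hodd.pos.ne'
  have hN4 : 3 ^ p + 1 = 4 * N := by omega
  obtain ⟨m, hm⟩ := hodd
  have hsign : (-1 : ℤ) ^ (N / 2) = (-1) ^ ((p - 1) / 2) := by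
    rw [neg_one_pow_eq_pow_mod_two, neg_one_pow_eq_pow_mod_two (n := (p - 1) / 2)]
    congr 1; omega
  have ht : (QuadraticAlgebra.omega : QuadraticAlgebra (ZMod N) 3 0) ^ 2 = 3 := by
    rw [sq, QuadraticAlgebra.omega_mul_omega_eq_algebraMap, map_zero, zero_mul, add_zero,
      map_ofNat]
  rw [← hsign]
  exact dvd_cubicSeq_sub_of_sq_eq_three ht (by omega) (by omega) hN4

theorem base_three_wagstaff_test (p : ℕ) (hp : p.Prime) (hodd : Odd p)
    (hN : Nat.Prime ((3 ^ p + 1) / 4)) :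
    (((3 ^ p + 1) / 4 : ℕ) : ℤ) ∣
      cubicSeq p - 194 + (-1) ^ ((p - 1) / 2) * 168 :=
  base_three_wagstaff_test_general p hodd hN
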